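/- Let n ≥ 2, 0 ≤ s ≤ n, and ε > 0. Then there exists δ_0 > 0, depending only on ε, n and s, such that the following holds for all 0 < δ < δ_0. Let P ⊆ B(0,1) ⊆ ℝ^n be a (δ^{-ε}, δ, s)-set. Then there exists a measurable set E ⊆ S^{n-1} with σ(E) ≤ δ^{ε} and the following property: if e ∈ S^{n-1} \ E and P' ⊆ P is any subset with |P'| ≥ δ^{-s+ε}, then N(π_e(P'), δ) ≥ δ^{-min{s,1} + 6ε}. -/

import Mathlib

open Metric MeasureTheory ENNReal

/-- The uniform (rotation-invariant) probability measure on the unit sphere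
`S^{n-1} ⊆ ℝ^n`, obtained by normalising the surface measure `volume.toSphere`. -/
noncomputable def sphereMeasure (n : ℕ) :
    Measure (sphere (0 : EuclideanSpace ℝ (Fin n)) 1) :=
  ((volume : Measure (EuclideanSpace ℝ (Fin n))).toSphere Set.univ)⁻¹ •
    (volume : Measure (EuclideanSpace ℝ (Fin n))).toSphere

/-- `coverNum A δ` is the least number of closed balls of radius `δ` needed to cover `A`
(as a value in `ℝ≥0∞`; it is `⊤` if no finite cover exists). -/
noncomputable def coverNum {X : Type*} [PseudoMetricSpace X] (A : Set X) (δ : ℝ) : ℝ≥0∞ :=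
  ⨅ (s : Finset X) (_ : A ⊆ ⋃ x ∈ s, closedBall x δ), (s.card : ℝ≥0∞)

/-- The `s`-dimensional Hausdorff content `H^s_∞`. -/
noncomputable def hausdorffContent {n : ℕ} (s : ℝ) (A : Set (EuclideanSpace ℝ (Fin n))) : ℝ≥0∞ :=
  ⨅ (U : ℕ → Set (EuclideanSpace ℝ (Fin n))) (_ : A ⊆ ⋃ i, U i), ∑' i, EMetric.diam (U i) ^ s

/-- A finite set `P ⊆ ℝ^n` is a `(C,δ,s)`-set if `|P ∩ B(x,r)| ≤ C (r/δ)^s` for all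
`x ∈ ℝ^n` and all `δ ≤ r ≤ 1`, where `B(x,r)` is the closed ball. -/
def IsDeltaSet {n : ℕ} (C δ s : ℝ) (P : Finset (EuclideanSpace ℝ (Fin n))) : Prop :=
  ∀ (x : EuclideanSpace ℝ (Fin n)) (r : ℝ), δ ≤ r → r ≤ 1 →
    (((P : Set (EuclideanSpace ℝ (Fin n))) ∩ closedBall x r).ncard : ℝ) ≤ C * (r / δ) ^ s

/-!
For `p ≠ q`, the directions `e` with `|⟪p - q, e⟫| ≤ 2δ` form a band of measure
`≲ δ / |p - q|`. Summing over dyadic shells around each point and using the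
`(δ^{-ε}, δ, s)` condition, the expected number of pairs of `P` with `2δ`-close projections
is `≲ δ^{min(s,1) - 2s - 3ε}`, the `≈ log(1/δ)` shells being absorbed into `δ^{-ε}`.
By Chebyshev this number is `< δ^{min(s,1) - 2s - 4ε}` outside a set of directions of
measure `δ^ε`. If `π_e(P')` is covered by `N` balls of radius `δ`, Cauchy–Schwarz over the
balls yields at least `|P'|² / N` such pairs, so `N ≥ |P'|² δ^{-min(s,1) + 2s + 4ε}`.
-/

open Filter Topology Finset
open scoped Pointwise

local notation "𝔼" n:max => EuclideanSpace ℝ (Fin n)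

section Sphere

lemma volume_slab_le {m : ℕ} {u : 𝔼 (m + 1)} (hu : ‖u‖ = 1) (t : ℝ) :
    volume {x : 𝔼 (m + 1) | ‖x‖ ≤ 1 ∧ |inner ℝ u x| ≤ t} ≤
      2 ^ (m + 1) * ENNReal.ofReal t := by
  obtain ⟨b, hb⟩ := (orthonormal_subsingleton_iff.mpr fun _ => hu :
      Orthonormal ℝ (({0} : Set (Fin (m + 1))).domRestrict fun _ => u)
    ).exists_orthonormalBasis_extension_of_card_eq (by simp)
  have hb0 : b 0 = u := hb 0 rfl
  set box : Set (Fin (m + 1) → ℝ) :=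
    Set.univ.pi (Fin.cons (Set.Icc (-t) t) fun _ => Set.Icc (-1) 1)
  have hbox : MeasurableSet box :=
    .univ_pi fun i => by cases i using Fin.cases <;> exact measurableSet_Icc
  have hsub :
      {x | ‖x‖ ≤ 1 ∧ |inner ℝ u x| ≤ t} ⊆ b.repr ⁻¹' (WithLp.ofLp ⁻¹' box) := by
    rintro x ⟨hx1, hxt⟩ i -
    simp only [b.repr_apply_apply]
    cases i using Fin.cases with
    | zero => simpa [abs_le, hb0] using hxt
    | succ j =>
      simpa [abs_le] using (abs_real_inner_le_norm _ _).trans (by simpa [b.orthonormal.1] using hx1)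
  calc _ ≤ volume (b.repr ⁻¹' (WithLp.ofLp ⁻¹' box)) := measure_mono hsub
    _ = volume box := by
      rw [b.measurePreserving_repr.measure_preimage
          ((PiLp.volume_preserving_ofLp _).measurable hbox).nullMeasurableSet,
        (PiLp.volume_preserving_ofLp _).measure_preimage hbox.nullMeasurableSet]
    _ = 2 ^ (m + 1) * ENNReal.ofReal t := by
      rw [volume_pi_pi, Fin.prod_univ_succ]
      simp only [Fin.cons_zero, Fin.cons_succ, Real.volume_Icc, Finset.prod_const,
        Finset.card_univ, Fintype.card_fin, sub_neg_eq_add, ← two_mul, mul_one]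
      rw [ENNReal.ofReal_mul zero_le_two, ENNReal.ofReal_ofNat, pow_succ]
      ring

lemma sphereMeasure_le_one (n : ℕ) (A : Set (sphere (0 : 𝔼 n) 1)) :
    sphereMeasure n A ≤ 1 := by
  rw [sphereMeasure, Measure.smul_apply, smul_eq_mul]
  exact (mul_le_mul_right (measure_mono (Set.subset_univ A)) _).trans (ENNReal.inv_mul_le_one _)

lemma measurableSet_abs_inner_le {n : ℕ} (v : 𝔼 n) (t : ℝ) :
    MeasurableSet {e : sphere (0 : 𝔼 n) 1 | |inner ℝ v (e : 𝔼 n)| ≤ t} :=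
  (isClosed_le (continuous_const.inner continuous_subtype_val).abs continuous_const).measurableSet

noncomputable def bandConst (n : ℕ) : ℝ :=
  (((volume : Measure (𝔼 n)).toSphere Set.univ)⁻¹ * n * 2 ^ n).toReal

lemma bandConst_nonneg (n : ℕ) : 0 ≤ bandConst n := toReal_nonneg

theorem sphereMeasure_abs_inner_le {n : ℕ} {v : 𝔼 n} (hv : v ≠ 0) (t : ℝ) :
    sphereMeasure n {e | |inner ℝ v (e : 𝔼 n)| ≤ t} ≤
      ENNReal.ofReal (bandConst n * t / ‖v‖) := by
  rcases n with _ | m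
  · exact absurd (Subsingleton.elim v 0) hv
  set c := (volume : Measure (𝔼 (m + 1))).toSphere Set.univ
  have hc : c ≠ 0 := by
    rw [show c = _ from Measure.toSphere_apply_univ _]
    exact mul_ne_zero (by simp) (measure_ball_pos _ _ one_pos).ne'
  set A := {e : sphere (0 : 𝔼 (m + 1)) 1 | |inner ℝ v (e : 𝔼 (m + 1))| ≤ t}
  have hcone : Set.Ioo (0 : ℝ) 1 • ((↑) '' A : Set (𝔼 (m + 1))) ⊆
      {x | ‖x‖ ≤ 1 ∧ |inner ℝ (‖v‖⁻¹ • v) x| ≤ t / ‖v‖} := by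
    rintro _ ⟨r, ⟨hr0, hr1⟩, _, ⟨e, he, rfl⟩, rfl⟩
    have he1 : ‖(e : 𝔼 (m + 1))‖ = 1 := by simp
    refine ⟨by simp [norm_smul, he1, abs_of_pos hr0, hr1.le], ?_⟩
    rw [real_inner_smul_left, real_inner_smul_right, abs_mul, abs_mul, abs_of_pos hr0,
      abs_inv, abs_norm, inv_mul_eq_div]
    gcongr
    exact (mul_le_of_le_one_left (abs_nonneg _) hr1.le).trans he
  calc sphereMeasure (m + 1) A
      = c⁻¹ * ((m + 1) * volume (Set.Ioo (0 : ℝ) 1 • ((↑) '' A : Set (𝔼 (m + 1))))) := by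
        rw [sphereMeasure, Measure.smul_apply, smul_eq_mul,
          Measure.toSphere_apply' _ (measurableSet_abs_inner_le v t)]
        simp only [finrank_euclideanSpace, Fintype.card_fin]
        push_cast
        rfl
    _ ≤ c⁻¹ * ((m + 1) * (2 ^ (m + 1) * ENNReal.ofReal (t / ‖v‖))) := by
        gcongr
        exact (measure_mono hcone).trans (volume_slab_le (norm_smul_inv_norm hv) _)
    _ = ENNReal.ofReal (bandConst (m + 1) * t / ‖v‖) := by
        rw [bandConst, mul_div_assoc, ENNReal.ofReal_mul toReal_nonneg,
          ofReal_toReal (mul_ne_top (mul_ne_top (inv_ne_top.mpr hc) (natCast_ne_top _))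
            (pow_ne_top ofNat_ne_top))]
        push_cast
        ring

end Sphere

section ClosePairs

variable {α β : Type*} [PseudoMetricSpace β]

noncomputable def closePairs (P : Finset α) (f : α → β) (δ : ℝ) : Finset (α × α) :=
  (P ×ˢ P).filter fun pq => dist (f pq.1) (f pq.2) ≤ 2 * δ

lemma closePairs_mono {P P' : Finset α} (h : P' ⊆ P) (f : α → β) (δ : ℝ) :
    closePairs P' f δ ⊆ closePairs P f δ :=
  filter_subset_filter _ (product_subset_product h h)

lemma sq_card_le_card_mul_card_closePairs {P : Finset α} {f : α → β} {δ : ℝ} {F : Finset β}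
    (hF : f '' P ⊆ ⋃ x ∈ F, closedBall x δ) : #P ^ 2 ≤ #F * #(closePairs P f δ) := by
  classical
  rcases P.eq_empty_or_nonempty with rfl | ⟨p₀, -⟩
  · simp
  have : Nonempty β := ⟨f p₀⟩
  have hcover : ∀ p ∈ P, ∃ x ∈ F, dist (f p) x ≤ δ := fun p hp => by
    simpa using hF (Set.mem_image_of_mem f hp)
  choose! c hcF hc using hcover
  set fiber := fun x => P.filter (c · = x)
  have hsame : (P ×ˢ P).filter (fun pq => c pq.1 = c pq.2) ⊆ closePairs P f δ := by
    intro pq hpq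
    simp only [mem_filter, mem_product] at hpq
    obtain ⟨⟨hp, hq⟩, hpq⟩ := hpq
    refine mem_filter.mpr ⟨mem_product.mpr ⟨hp, hq⟩, ?_⟩
    calc dist (f pq.1) (f pq.2) ≤ dist (f pq.1) (c pq.1) + dist (f pq.2) (c pq.2) := by
          rw [hpq]; exact dist_triangle_right _ _ _
      _ ≤ 2 * δ := by linarith [hc _ hp, hc _ hq]
  have hsame_card :
      #((P ×ˢ P).filter (fun pq => c pq.1 = c pq.2)) = ∑ x ∈ F, #(fiber x) ^ 2 := by
    rw [card_eq_sum_card_fiberwise (f := fun pq => c pq.1) (t := F)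
      (fun pq hpq => hcF _ (mem_product.mp (mem_filter.mp hpq).1).1)]
    refine sum_congr rfl fun x _ => ?_
    rw [sq, ← card_product]
    congr 1
    ext ⟨p, q⟩
    simp only [fiber, mem_filter, mem_product]
    constructor
    · rintro ⟨⟨⟨hp, hq⟩, hpq⟩, rfl⟩
      exact ⟨⟨hp, rfl⟩, hq, hpq.symm⟩
    · rintro ⟨⟨hp, rfl⟩, hq, hqx⟩
      exact ⟨⟨⟨hp, hq⟩, hqx.symm⟩, rfl⟩
  calc #P ^ 2 = (∑ x ∈ F, #(fiber x)) ^ 2 := by rw [card_eq_sum_card_fiberwise hcF]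
    _ ≤ #F * ∑ x ∈ F, #(fiber x) ^ 2 := sq_sum_le_card_mul_sum_sq
    _ ≤ #F * #(closePairs P f δ) := by
      rw [← hsame_card]; exact Nat.mul_le_mul_left _ (card_le_card hsame)

end ClosePairs

lemma exists_exceptional_set {Ω α β : Type*} [MeasurableSpace Ω] [PseudoMetricSpace β]
    (μ : Measure Ω) (P : Finset α) (f : Ω → α → β) {δ θ η : ℝ} (hθ : 0 < θ)
    (hmeas : Measurable fun ω => (#(closePairs P (f ω) δ) : ℝ≥0∞))
    (hint : ∫⁻ ω, #(closePairs P (f ω) δ) ∂μ ≤ ENNReal.ofReal (θ * η)) :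
    ∃ E : Set Ω, MeasurableSet E ∧ μ E ≤ ENNReal.ofReal η ∧
      ∀ ω ∉ E, ∀ P' ⊆ P, ENNReal.ofReal (#P' ^ 2 / θ) ≤ coverNum (f ω '' P') δ := by
  refine ⟨{ω | ENNReal.ofReal θ ≤ #(closePairs P (f ω) δ)},
    measurableSet_le measurable_const hmeas, ?_, fun ω hω P' hP' => ?_⟩
  · have hθ' : ENNReal.ofReal θ ≠ 0 := by simpa using hθ
    refine (ENNReal.mul_le_mul_iff_right hθ' ofReal_ne_top).mp ?_
    calc ENNReal.ofReal θ * μ _ ≤ ∫⁻ ω, #(closePairs P (f ω) δ) ∂μ :=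
          mul_meas_ge_le_lintegral₀ hmeas.aemeasurable _
      _ ≤ ENNReal.ofReal θ * ENNReal.ofReal η := by rwa [← ENNReal.ofReal_mul hθ.le]
  have hpairs : (#(closePairs P (f ω) δ) : ℝ) < θ := by
    have : (#(closePairs P (f ω) δ) : ℝ≥0∞) < ENNReal.ofReal θ := not_le.mp hω
    rwa [← ENNReal.ofReal_natCast, ENNReal.ofReal_lt_ofReal_iff hθ] at this
  refine le_iInf₂ fun F hF => ?_
  rw [← ENNReal.ofReal_natCast]
  refine ENNReal.ofReal_le_ofReal ((div_le_iff₀ hθ).mpr ?_)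
  calc (#P' : ℝ) ^ 2 ≤ #F * #(closePairs P' (f ω) δ) := by
        exact_mod_cast sq_card_le_card_mul_card_closePairs hF
    _ ≤ #F * θ := by
        gcongr
        exact (Nat.cast_le.mpr (card_le_card (closePairs_mono hP' _ _))).trans hpairs.le

section Projections

variable {n : ℕ}

lemma card_closePairs_inner_eq_sum (P : Finset (𝔼 n)) (δ : ℝ) (e : sphere (0 : 𝔼 n) 1) :
    (#(closePairs P (fun x => inner ℝ x (e : 𝔼 n)) δ) : ℝ≥0∞) =
      ∑ pq ∈ P ×ˢ P, {e' : sphere (0 : 𝔼 n) 1 |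
        |inner ℝ (pq.1 - pq.2) (e' : 𝔼 n)| ≤ 2 * δ}.indicator 1 e := by
  rw [closePairs, card_filter]
  push_cast
  refine sum_congr rfl fun pq _ => ?_
  simp [Set.indicator_apply, Real.dist_eq, inner_sub_left]

lemma measurable_card_closePairs_inner (P : Finset (𝔼 n)) (δ : ℝ) :
    Measurable fun e : sphere (0 : 𝔼 n) 1 =>
      (#(closePairs P (fun x => inner ℝ x (e : 𝔼 n)) δ) : ℝ≥0∞) := by
  simp_rw [card_closePairs_inner_eq_sum]
  exact Finset.measurable_sum _ fun pq _ =>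
    measurable_one.indicator (measurableSet_abs_inner_le _ _)

lemma lintegral_card_closePairs_inner (P : Finset (𝔼 n)) (δ : ℝ) :
    ∫⁻ e, #(closePairs P (fun x => inner ℝ x (e : 𝔼 n)) δ) ∂sphereMeasure n =
      ∑ pq ∈ P ×ˢ P, sphereMeasure n {e | |inner ℝ (pq.1 - pq.2) (e : 𝔼 n)| ≤ 2 * δ} := by
  simp_rw [card_closePairs_inner_eq_sum]
  rw [lintegral_finsetSum _ fun pq _ =>
    measurable_one.indicator (measurableSet_abs_inner_le _ _)]
  exact sum_congr rfl fun pq _ => lintegral_indicator_one (measurableSet_abs_inner_le _ _)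

end Projections

section DeltaSet

variable {n : ℕ} {C δ s : ℝ} {P : Finset (𝔼 n)}

lemma IsDeltaSet.card_filter_dist_le_of_le_one (hP : IsDeltaSet C δ s P) (p : 𝔼 n) {r : ℝ}
    (hδr : δ ≤ r) (hr1 : r ≤ 1) :
    (#(P.filter fun q => dist p q ≤ r) : ℝ) ≤ C * (r / δ) ^ s := by
  convert hP p r hδr hr1 using 2
  rw [← Set.ncard_coe_finset, coe_filter]
  congr 1
  ext q
  simp [dist_comm]

lemma IsDeltaSet.card_le (hP : IsDeltaSet C δ s P) (hP1 : (P : Set (𝔼 n)) ⊆ closedBall 0 1)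
    (hδ : 0 < δ) (hδ1 : δ ≤ 1) : (#P : ℝ) ≤ C * δ ^ (-s) := by
  have h := hP.card_filter_dist_le_of_le_one 0 hδ1 le_rfl
  rwa [filter_true_of_mem fun q hq => by simpa [dist_comm] using hP1 hq, one_div,
    Real.inv_rpow hδ.le, ← Real.rpow_neg hδ.le] at h

lemma IsDeltaSet.nonneg (hP : IsDeltaSet C δ s P) (hP1 : (P : Set (𝔼 n)) ⊆ closedBall 0 1)
    (hδ : 0 < δ) (hδ1 : δ ≤ 1) : 0 ≤ C :=
  (mul_nonneg_iff_of_pos_right (Real.rpow_pos_of_pos hδ _)).mp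
    ((Nat.cast_nonneg _).trans (hP.card_le hP1 hδ hδ1))

lemma IsDeltaSet.card_filter_dist_le (hP : IsDeltaSet C δ s P)
    (hP1 : (P : Set (𝔼 n)) ⊆ closedBall 0 1) (hδ : 0 < δ) (hδ1 : δ ≤ 1) (hs : 0 ≤ s)
    (p : 𝔼 n) {r : ℝ} (hδr : δ ≤ r) :
    (#(P.filter fun q => dist p q ≤ r) : ℝ) ≤ C * (r / δ) ^ s := by
  rcases le_or_gt r 1 with hr1 | hr1
  · exact hP.card_filter_dist_le_of_le_one p hδr hr1
  calc (#(P.filter fun q => dist p q ≤ r) : ℝ) ≤ #P := by exact_mod_cast card_filter_le _ _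
    _ ≤ C * (1 / δ) ^ s := by
        rw [one_div, Real.inv_rpow hδ.le, ← Real.rpow_neg hδ.le]
        exact hP.card_le hP1 hδ hδ1
    _ ≤ C * (r / δ) ^ s := by
        have := hP.nonneg hP1 hδ hδ1
        gcongr

end DeltaSet

lemma div_rpow_mul_div_le {δ R s : ℝ} (hδ : 0 < δ) (hδR : δ ≤ R) (hR2 : R ≤ 2) (hs : 0 ≤ s) :
    (R / δ) ^ s * (δ / R) ≤ 2 ^ s * δ ^ (min s 1 - s) := by
  have hRδ : 1 ≤ R / δ := (one_le_div hδ).mpr hδR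
  rw [← inv_div R δ, ← div_eq_mul_inv, ← Real.rpow_sub_one (by positivity)]
  rcases le_total s 1 with hs1 | hs1
  · rw [min_eq_left hs1, sub_self, Real.rpow_zero, mul_one]
    exact (Real.rpow_le_one_of_one_le_of_nonpos hRδ (by linarith)).trans
      (Real.one_le_rpow one_le_two hs)
  · rw [min_eq_right hs1]
    calc (R / δ) ^ (s - 1) ≤ (2 / δ) ^ (s - 1) := by gcongr
      _ = 2 ^ (s - 1) * δ ^ (1 - s) := by
          rw [Real.div_rpow zero_le_two hδ.le, div_eq_mul_inv, ← Real.rpow_neg hδ.le, neg_sub]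
      _ ≤ 2 ^ s * δ ^ (1 - s) := by
          gcongr ?_ * _
          exact Real.rpow_le_rpow_of_exponent_le one_le_two (by linarith)

/-- A majorant of `min 1 (K * δ / d)` for `d ≤ 2`, written with indicators of balls of radius
`2 / 2 ^ j` so that summing it over the points of a set produces ball counts. -/
noncomputable def dyadicWeight (K δ : ℝ) (J : ℕ) (d : ℝ) : ℝ :=
  (if d ≤ δ then 1 else 0) +
    ∑ j ∈ range (J + 1), if d ≤ 2 / 2 ^ j then K * δ * 2 ^ j else 0

section DyadicWeight

variable {K δ d : ℝ} {J : ℕ}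

lemma sum_dyadic_shells_nonneg (hK : 0 ≤ K) (hδ : 0 ≤ δ) :
    0 ≤ ∑ j ∈ range (J + 1), if d ≤ 2 / 2 ^ j then K * δ * 2 ^ j else 0 :=
  sum_nonneg fun _ _ => by split_ifs <;> positivity

lemma dyadicWeight_nonneg (hK : 0 ≤ K) (hδ : 0 ≤ δ) : 0 ≤ dyadicWeight K δ J d :=
  add_nonneg (by split_ifs <;> norm_num) (sum_dyadic_shells_nonneg hK hδ)

lemma one_le_dyadicWeight (hK : 0 ≤ K) (hδ : 0 ≤ δ) (hd : d ≤ δ) :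
    1 ≤ dyadicWeight K δ J d := by
  rw [dyadicWeight, if_pos hd]
  exact le_add_of_nonneg_right (sum_dyadic_shells_nonneg hK hδ)

lemma div_le_dyadicWeight (hK : 0 ≤ K) (hδ : 0 < δ) (hJ : 1 ≤ δ * 2 ^ J) (hδd : δ < d)
    (hd2 : d ≤ 2) : K * δ / d ≤ dyadicWeight K δ J d := by
  have hd : 0 < d := hδ.trans hδd
  obtain ⟨j, hj, hj'⟩ := exists_nat_pow_near ((one_le_div hd).mpr hd2) one_lt_two
  have hjJ : j ∈ range (J + 1) := by
    rw [mem_range, ← pow_lt_pow_iff_right₀ (one_lt_two : (1 : ℝ) < 2)]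
    calc (2 : ℝ) ^ j ≤ 2 / d := hj
      _ < 2 / δ := by gcongr
      _ ≤ 2 ^ (J + 1) := by rw [pow_succ, div_le_iff₀ hδ]; linarith
  have hdj : d ≤ 2 / 2 ^ j := by
    rw [le_div_iff₀ (by positivity), mul_comm, ← le_div_iff₀ hd]
    exact hj
  have hdj' : 1 ≤ d * 2 ^ j := by
    rw [pow_succ, div_lt_iff₀ hd] at hj'
    linarith
  calc K * δ / d ≤ K * δ * 2 ^ j := by
        rw [div_le_iff₀ hd]
        nlinarith [mul_nonneg hK hδ.le]
    _ = if d ≤ 2 / 2 ^ j then K * δ * 2 ^ j else 0 := (if_pos hdj).symm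
    _ ≤ ∑ i ∈ range (J + 1), if d ≤ 2 / 2 ^ i then K * δ * 2 ^ i else 0 :=
        single_le_sum (f := fun i => if d ≤ 2 / 2 ^ i then K * δ * 2 ^ i else 0)
          (fun _ _ => by split_ifs <;> positivity) hjJ
    _ ≤ dyadicWeight K δ J d := le_add_of_nonneg_left (by split_ifs <;> norm_num)

end DyadicWeight

section Energy

variable {n : ℕ} {C δ s ε K : ℝ} {J : ℕ} {P : Finset (𝔼 n)}

lemma sphereMeasure_abs_inner_sub_le_dyadicWeight (hδ : 0 < δ) (hJ : 1 ≤ δ * 2 ^ J)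
    {p q : 𝔼 n} (hp : p ∈ closedBall 0 1) (hq : q ∈ closedBall 0 1) :
    sphereMeasure n {e | |inner ℝ (p - q) (e : 𝔼 n)| ≤ 2 * δ} ≤
      ENNReal.ofReal (dyadicWeight (2 * bandConst n) δ J (dist p q)) := by
  have hK := bandConst_nonneg n
  rcases le_or_gt (dist p q) δ with hpq | hpq
  · refine (sphereMeasure_le_one n _).trans ?_
    rw [← ENNReal.ofReal_one]
    exact ENNReal.ofReal_le_ofReal (one_le_dyadicWeight (by positivity) hδ.le hpq)
  refine (sphereMeasure_abs_inner_le (sub_ne_zero.mpr (dist_pos.mp (hδ.trans hpq))) _).trans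
    (ENNReal.ofReal_le_ofReal ?_)
  have hpq2 : dist p q ≤ 2 := (dist_triangle_right p q 0).trans
    (by linarith [mem_closedBall.mp hp, mem_closedBall.mp hq])
  rw [← dist_eq_norm, ← mul_assoc, mul_comm (bandConst n) 2]
  exact div_le_dyadicWeight (by positivity) hδ hJ hpq hpq2

lemma IsDeltaSet.dyadic_shell_le (hP : IsDeltaSet C δ s P)
    (hP1 : (P : Set (𝔼 n)) ⊆ closedBall 0 1) (hδ : 0 < δ) (hδ1 : δ ≤ 1)
    (hs : 0 ≤ s) (hK : 0 ≤ K) (hJ : δ * 2 ^ J ≤ 2) (p : 𝔼 n) {j : ℕ} (hj : j ≤ J) :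
    K * δ * 2 ^ j * #(P.filter fun q => dist p q ≤ 2 / 2 ^ j) ≤
      2 ^ (s + 1) * K * C * δ ^ (min s 1 - s) := by
  have hC := hP.nonneg hP1 hδ hδ1
  have hδR : δ ≤ 2 / 2 ^ j := by
    rw [le_div_iff₀ (by positivity)]
    exact (mul_le_mul_of_nonneg_left (pow_le_pow_right₀ one_le_two hj) hδ.le).trans hJ
  have hR2 : 2 / 2 ^ j ≤ (2 : ℝ) := div_le_self zero_le_two (one_le_pow₀ one_le_two)
  calc K * δ * 2 ^ j * #(P.filter fun q => dist p q ≤ 2 / 2 ^ j)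
      ≤ K * δ * 2 ^ j * (C * ((2 / 2 ^ j) / δ) ^ s) := by
        gcongr
        exact hP.card_filter_dist_le hP1 hδ hδ1 hs p hδR
    _ = 2 * K * C * (((2 / 2 ^ j) / δ) ^ s * (δ / (2 / 2 ^ j))) := by
        field_simp
    _ ≤ 2 * K * C * (2 ^ s * δ ^ (min s 1 - s)) :=
        mul_le_mul_of_nonneg_left (div_rpow_mul_div_le hδ hδR hR2 hs) (by positivity)
    _ = 2 ^ (s + 1) * K * C * δ ^ (min s 1 - s) := by
        rw [Real.rpow_add_one two_ne_zero]
        ring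

lemma IsDeltaSet.sum_dyadicWeight_le (hP : IsDeltaSet C δ s P)
    (hP1 : (P : Set (𝔼 n)) ⊆ closedBall 0 1) (hδ : 0 < δ) (hδ1 : δ ≤ 1)
    (hs : 0 ≤ s) (hK : 0 ≤ K) (hJ : δ * 2 ^ J ≤ 2) (p : 𝔼 n) :
    ∑ q ∈ P, dyadicWeight K δ J (dist p q) ≤
      C * (1 + (J + 1) * (2 ^ (s + 1) * K)) * δ ^ (min s 1 - s) := by
  have hC := hP.nonneg hP1 hδ hδ1
  have hnear : ∑ q ∈ P, (if dist p q ≤ δ then 1 else 0 : ℝ) ≤ C := by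
    rw [sum_boole]
    simpa [div_self hδ.ne'] using hP.card_filter_dist_le hP1 hδ hδ1 hs p le_rfl
  have hshells : ∑ q ∈ P, ∑ j ∈ range (J + 1),
      (if dist p q ≤ 2 / 2 ^ j then K * δ * 2 ^ j else 0) ≤
        (J + 1) * (2 ^ (s + 1) * K * C * δ ^ (min s 1 - s)) := by
    rw [sum_comm]
    calc _ ≤ ∑ _j ∈ range (J + 1), 2 ^ (s + 1) * K * C * δ ^ (min s 1 - s) := by
          refine sum_le_sum fun j hj => ?_
          rw [← sum_filter, sum_const, nsmul_eq_mul, mul_comm]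
          exact hP.dyadic_shell_le hP1 hδ hδ1 hs hK hJ p (Nat.lt_succ_iff.mp (mem_range.mp hj))
      _ = _ := by simp
  have hpow : 1 ≤ δ ^ (min s 1 - s) :=
    Real.one_le_rpow_of_pos_of_le_one_of_nonpos hδ hδ1 (by linarith [min_le_left s 1])
  simp only [dyadicWeight, sum_add_distrib]
  linarith [mul_le_mul_of_nonneg_left hpow hC]

lemma IsDeltaSet.lintegral_card_closePairs_inner_le (hP : IsDeltaSet C δ s P)
    (hP1 : (P : Set (𝔼 n)) ⊆ closedBall 0 1) (hδ : 0 < δ) (hδ1 : δ ≤ 1)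
    (hs : 0 ≤ s) (hJ1 : 1 ≤ δ * 2 ^ J) (hJ2 : δ * 2 ^ J ≤ 2) :
    ∫⁻ e, #(closePairs P (fun x => inner ℝ x (e : 𝔼 n)) δ) ∂sphereMeasure n ≤
      ENNReal.ofReal (C * δ ^ (-s) *
        (C * (1 + (J + 1) * (2 ^ (s + 1) * (2 * bandConst n))) * δ ^ (min s 1 - s))) := by
  set K := 2 * bandConst n
  have hK : 0 ≤ K := by have := bandConst_nonneg n; positivity
  have hw : ∀ p q : 𝔼 n, 0 ≤ dyadicWeight K δ J (dist p q) :=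
    fun _ _ => dyadicWeight_nonneg hK hδ.le
  rw [lintegral_card_closePairs_inner, sum_product]
  calc _ ≤ ∑ p ∈ P, ∑ q ∈ P, ENNReal.ofReal (dyadicWeight K δ J (dist p q)) :=
        sum_le_sum fun p hp => sum_le_sum fun q hq =>
          sphereMeasure_abs_inner_sub_le_dyadicWeight hδ hJ1 (hP1 hp) (hP1 hq)
    _ = ENNReal.ofReal (∑ p ∈ P, ∑ q ∈ P, dyadicWeight K δ J (dist p q)) := by
        rw [ENNReal.ofReal_sum_of_nonneg fun p _ => sum_nonneg fun q _ => hw p q]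
        exact sum_congr rfl fun p _ => (ENNReal.ofReal_sum_of_nonneg fun q _ => hw p q).symm
    _ ≤ _ := by
        refine ENNReal.ofReal_le_ofReal ((sum_le_sum fun p _ =>
          hP.sum_dyadicWeight_le hP1 hδ hδ1 hs (by positivity) hJ2 p).trans ?_)
        have := hP.nonneg hP1 hδ hδ1
        rw [sum_const, nsmul_eq_mul]
        gcongr
        exact hP.card_le hP1 hδ hδ1

theorem IsDeltaSet.exists_exceptional_directions (hP : IsDeltaSet (δ ^ (-ε)) δ s P)
    (hP1 : (P : Set (𝔼 n)) ⊆ closedBall 0 1) (hδ : 0 < δ) (hδ1 : δ ≤ 1)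
    (hs : 0 ≤ s) (hJ1 : 1 ≤ δ * 2 ^ J) (hJ2 : δ * 2 ^ J ≤ 2)
    (hJε : 1 + (J + 1) * (2 ^ (s + 1) * (2 * bandConst n)) ≤ δ ^ (-ε)) :
    ∃ E : Set (sphere (0 : 𝔼 n) 1), MeasurableSet E ∧
      sphereMeasure n E ≤ ENNReal.ofReal (δ ^ ε) ∧
      ∀ e ∉ E, ∀ P' ⊆ P, δ ^ (-s + ε) ≤ (#P' : ℝ) →
        ENNReal.ofReal (δ ^ (-(min s 1) + 6 * ε)) ≤
          coverNum ((fun x => inner ℝ x (e : 𝔼 n)) '' (P' : Set (𝔼 n))) δ := by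
  have hint : ∫⁻ e, #(closePairs P (fun x => inner ℝ x (e : 𝔼 n)) δ) ∂sphereMeasure n ≤
      ENNReal.ofReal (δ ^ (min s 1 - 2 * s - 4 * ε) * δ ^ ε) := by
    refine (hP.lintegral_card_closePairs_inner_le hP1 hδ hδ1 hs hJ1 hJ2).trans
      (ENNReal.ofReal_le_ofReal ?_)
    calc _ ≤ δ ^ (-ε) * δ ^ (-s) * (δ ^ (-ε) * δ ^ (-ε) * δ ^ (min s 1 - s)) := by gcongr
      _ = δ ^ (min s 1 - 2 * s - 4 * ε) * δ ^ ε := by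
          simp only [← Real.rpow_add hδ]
          ring_nf
  obtain ⟨E, hE, hσE, hcover⟩ := exists_exceptional_set (sphereMeasure n) P
    (fun e x => inner ℝ x (e : 𝔼 n)) (by positivity)
    (measurable_card_closePairs_inner P δ) hint
  refine ⟨E, hE, hσE, fun e he P' hP' hcard =>
    (ENNReal.ofReal_le_ofReal ?_).trans (hcover e he P' hP')⟩
  rw [le_div_iff₀ (by positivity), ← Real.rpow_add hδ]
  calc δ ^ (-(min s 1) + 6 * ε + (min s 1 - 2 * s - 4 * ε)) = (δ ^ (-s + ε)) ^ 2 := by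
        rw [← Real.rpow_natCast, ← Real.rpow_mul hδ.le]
        ring_nf
    _ ≤ (#P' : ℝ) ^ 2 := by gcongr

end Energy

lemma exists_pow_two_mul_mem_Icc {δ : ℝ} (hδ : 0 < δ) (hδ1 : δ ≤ 1) :
    ∃ J : ℕ, 1 ≤ δ * 2 ^ J ∧ δ * 2 ^ J ≤ 2 ∧ (J : ℝ) ≤ Real.logb 2 δ⁻¹ + 1 := by
  obtain ⟨J, hJ, hJ'⟩ := exists_nat_pow_near ((one_le_inv₀ hδ).mpr hδ1) one_lt_two
  have hlower := mul_lt_mul_of_pos_left hJ' hδ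
  have hupper := mul_le_mul_of_nonneg_left hJ hδ.le
  rw [mul_inv_cancel₀ hδ.ne'] at hlower hupper
  refine ⟨J + 1, hlower.le, by rw [pow_succ]; linarith, ?_⟩
  push_cast
  have : (J : ℝ) ≤ Real.logb 2 δ⁻¹ :=
    (Real.le_logb_iff_rpow_le one_lt_two (inv_pos.mpr hδ)).mpr (by rwa [Real.rpow_natCast])
  linarith

lemma eventually_add_mul_logb_le_rpow_neg {ε : ℝ} (hε : 0 < ε) (a b : ℝ) :
    ∀ᶠ δ in 𝓝[>] 0, a + b * Real.logb 2 δ⁻¹ ≤ δ ^ (-ε) := by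
  have hrpow : Tendsto (fun δ : ℝ => δ ^ ε) (𝓝[>] 0) (𝓝 0) := by
    simpa [Real.zero_rpow hε.ne'] using
      (Real.continuousAt_rpow_const 0 ε (Or.inr hε.le)).tendsto.mono_left nhdsWithin_le_nhds
  have hlim : Tendsto (fun δ => (a + b * Real.logb 2 δ⁻¹) * δ ^ ε) (𝓝[>] 0) (𝓝 0) := by
    have h := (hrpow.const_mul a).sub
      ((tendsto_log_mul_rpow_nhdsGT_zero hε).const_mul (b / Real.log 2))
    rw [mul_zero, mul_zero, sub_zero] at h
    refine h.congr fun δ => ?_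
    rw [Real.logb, Real.log_inv]
    ring
  filter_upwards [hlim.eventually (gt_mem_nhds one_pos), self_mem_nhdsWithin]
    with δ hlt (hδ : 0 < δ)
  rw [Real.rpow_neg hδ.le]
  exact ((le_div_iff₀ (by positivity)).mpr hlt.le).trans_eq (one_div _)

theorem statement3_general (n : ℕ) (s ε : ℝ) (hs0 : 0 ≤ s) (hε : 0 < ε) :
    ∃ δ0 > (0 : ℝ), ∀ δ : ℝ, 0 < δ → δ < δ0 →
      ∀ P : Finset (EuclideanSpace ℝ (Fin n)),
        (P : Set (EuclideanSpace ℝ (Fin n))) ⊆ closedBall 0 1 →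
        IsDeltaSet (δ ^ (-ε)) δ s P →
        ∃ E : Set (sphere (0 : EuclideanSpace ℝ (Fin n)) 1), MeasurableSet E ∧
          sphereMeasure n E ≤ ENNReal.ofReal (δ ^ ε) ∧
          ∀ e : sphere (0 : EuclideanSpace ℝ (Fin n)) 1, e ∉ E →
            ∀ P' ⊆ P, δ ^ (-s + ε) ≤ (P'.card : ℝ) →
              ENNReal.ofReal (δ ^ (-(min s 1) + 6 * ε)) ≤
                coverNum ((fun x => (inner ℝ x (e : EuclideanSpace ℝ (Fin n)) : ℝ)) ''
                  (P' : Set (EuclideanSpace ℝ (Fin n)))) δ := by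
  set A := 2 ^ (s + 1) * (2 * bandConst n)
  have hA : 0 ≤ A := by have := bandConst_nonneg n; positivity
  obtain ⟨δ0, hδ0, hsmall⟩ := (nhdsGT_basis (0 : ℝ)).eventually_iff.mp
    (((eventually_lt_nhds one_pos).filter_mono nhdsWithin_le_nhds).and
      (eventually_add_mul_logb_le_rpow_neg hε (1 + 2 * A) A))
  refine ⟨δ0, hδ0, fun δ hδ hδδ0 P hP1 hP => ?_⟩
  obtain ⟨hδ1, hlog⟩ := hsmall ⟨hδ, hδδ0⟩
  obtain ⟨J, hJ1, hJ2, hJlog⟩ := exists_pow_two_mul_mem_Icc hδ hδ1.le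
  exact hP.exists_exceptional_directions hP1 hδ hδ1.le hs0 hJ1 hJ2
    (by linarith [mul_le_mul_of_nonneg_right hJlog hA])

/-- Discretised Marstrand projection estimate: for a `(δ^{-ε},δ,s)`-set `P ⊆ B(0,1)`,
outside an exceptional set of directions of σ-measure at most `δ^ε`, every subset
`P' ⊆ P` with `|P'| ≥ δ^{-s+ε}` has `N(π_e(P'),δ) ≥ δ^{-min{s,1}+6ε}`. -/
theorem statement3 (n : ℕ) (hn : 2 ≤ n) (s ε : ℝ) (hs0 : 0 ≤ s) (hsn : s ≤ n) (hε : 0 < ε) :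
    ∃ δ0 > (0 : ℝ), ∀ δ : ℝ, 0 < δ → δ < δ0 →
      ∀ P : Finset (EuclideanSpace ℝ (Fin n)),
        (P : Set (EuclideanSpace ℝ (Fin n))) ⊆ closedBall 0 1 →
        IsDeltaSet (δ ^ (-ε)) δ s P →
        ∃ E : Set (sphere (0 : EuclideanSpace ℝ (Fin n)) 1), MeasurableSet E ∧
          sphereMeasure n E ≤ ENNReal.ofReal (δ ^ ε) ∧
          ∀ e : sphere (0 : EuclideanSpace ℝ (Fin n)) 1, e ∉ E →
            ∀ P' ⊆ P, δ ^ (-s + ε) ≤ (P'.card : ℝ) →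
              ENNReal.ofReal (δ ^ (-(min s 1) + 6 * ε)) ≤
                coverNum ((fun x => (inner ℝ x (e : EuclideanSpace ℝ (Fin n)) : ℝ)) ''
                  (P' : Set (EuclideanSpace ℝ (Fin n)))) δ :=
  statement3_general n s ε hs0 hε
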